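/- arXiv:2604.19575 — 2 statements merged into one kernel-verified Lean document; each statement's English description precedes it below -/
import Mathlib

section
/- If n > d and P ∈ ℝ^{d×n} has ℚ-linearly independent columns, then for any s > 0 there is no constant C > 0 such that ‖U‖_{L²} ≤ C·(∑_{k≠0} |Pk|^{2s} |Û_k|²)^{1/2} holds for all zero-mean U ∈ H^∞(𝕋ⁿ); i.e., the space H̄_{P,0}^s(𝕋ⁿ) does not embed continuously into L²₀(𝕋ⁿ). In fact, the exponentials U_j(y) = exp(i k_j·y) with |P k_j| → 0 satisfy ‖U_j‖_{L²} = 1 while ‖U_j‖_{H̄_{P,0}^s} → 0. -/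
/-!
For `n > d` the linear map `x ↦ P x` on `ℝⁿ` has a nonzero kernel vector `v`. By compactness of
the unit cube, two multiples `a v`, `b v` with `a < b` have nearly equal fractional parts, so
`(b - a) v` lies within `δ` of a lattice point `k`, which is nonzero once `δ < 1 = ‖v‖`; hence
`‖P k‖ = ‖P (k - (b - a) v)‖ ≤ ‖P‖ δ`. The single Fourier modes `e^{i k·y}` along such `k`
have `L²` norm `1` and `H̄_{P,0}^s` norm `‖P k‖^s → 0`.
-/

open Filter Topology

/-- The projected lattice vector `P k ∈ ℝ^d` (as a point of Euclidean space). -/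
noncomputable def projVec {d n : ℕ} (P : Matrix (Fin d) (Fin n) ℝ) (k : Fin n → ℤ) :
    EuclideanSpace ℝ (Fin d) :=
  (EuclideanSpace.equiv (Fin d) ℝ).symm (P.mulVec fun j => (k j : ℝ))

/-- The columns of `P` are linearly independent over `ℚ`. -/
def QLinIndep {d n : ℕ} (P : Matrix (Fin d) (Fin n) ℝ) : Prop :=
  ∀ μ : Fin n → ℚ, (∀ i, ∑ j, P i j * (μ j : ℝ) = 0) → μ = 0

theorem exists_nat_smul_sub_intCast_norm_lt {ι : Type*} [Fintype ι] (v : ι → ℝ) {δ : ℝ}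
    (hδ : 0 < δ) : ∃ m : ℕ, 0 < m ∧ ∃ k : ι → ℤ, ‖(m : ℝ) • v - fun i => (k i : ℝ)‖ < δ := by
  set x : ℕ → ι → ℝ := fun N i => Int.fract (N * v i)
  have hx : ∀ N, x N ∈ Set.Icc (0 : ι → ℝ) 1 := fun N =>
    ⟨fun i => Int.fract_nonneg _, fun i => (Int.fract_lt_one _).le⟩
  obtain ⟨a, -, φ, hφ, hlim⟩ := isCompact_Icc.tendsto_subseq hx
  obtain ⟨N, hN⟩ := Metric.cauchySeq_iff'.1 hlim.cauchySeq δ hδ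
  have hab : φ N < φ (N + 1) := hφ (Nat.lt_succ_self N)
  refine ⟨φ (N + 1) - φ N, Nat.sub_pos_of_lt hab,
    fun i => ⌊(φ (N + 1) : ℝ) * v i⌋ - ⌊(φ N : ℝ) * v i⌋, ?_⟩
  convert hN (N + 1) N.le_succ using 1
  rw [dist_eq_norm]
  congr 1
  ext i
  simp only [x, Function.comp_apply, Pi.sub_apply, Pi.smul_apply, smul_eq_mul, Int.fract]
  push_cast [hab.le]
  ring

theorem ContinuousLinearMap.exists_intCast_ne_zero_norm_lt {ι E : Type*} [Fintype ι]
    [NormedAddCommGroup E] [NormedSpace ℝ E] (f : (ι → ℝ) →L[ℝ] E)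
    (hf : ¬ Function.Injective f) {ε : ℝ} (hε : 0 < ε) :
    ∃ k : ι → ℤ, k ≠ 0 ∧ ‖f fun i => (k i : ℝ)‖ < ε := by
  obtain ⟨v, hfv, hv⟩ : ∃ v, f v = 0 ∧ v ≠ 0 := by
    simpa [injective_iff_map_eq_zero, and_comm] using hf
  set u := ‖v‖⁻¹ • v
  have hu : ‖u‖ = 1 := norm_smul_inv_norm hv
  have hfu : f u = 0 := by simp [u, hfv]
  set δ := min 1 (ε / (‖f‖ + 1))
  obtain ⟨m, hm, k, hk⟩ := exists_nat_smul_sub_intCast_norm_lt u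
    (lt_min one_pos (by positivity) : 0 < δ)
  refine ⟨k, ?_, ?_⟩
  · rintro rfl
    have h0 : (fun i => ((0 : ι → ℤ) i : ℝ)) = 0 := by ext; simp
    have : ‖(m : ℝ) • u‖ < 1 := by
      simpa only [h0, sub_zero] using hk.trans_le (min_le_left _ _)
    rw [norm_smul, hu, mul_one, Real.norm_natCast] at this
    exact absurd this (not_lt.2 (Nat.one_le_cast.2 hm))
  · calc ‖f fun i => (k i : ℝ)‖ = ‖f ((m : ℝ) • u - fun i => (k i : ℝ))‖ := by
          rw [map_sub, map_smul, hfu, smul_zero, zero_sub, norm_neg]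
      _ ≤ ‖f‖ * (ε / (‖f‖ + 1)) :=
          (f.le_opNorm _).trans (by gcongr; exact hk.le.trans (min_le_right _ _))
      _ < (‖f‖ + 1) * (ε / (‖f‖ + 1)) := by gcongr; exact lt_add_one _
      _ = ε := by field_simp

theorem exists_projVec_ne_zero_norm_lt {d n : ℕ} (hdn : d < n) (P : Matrix (Fin d) (Fin n) ℝ)
    {ε : ℝ} (hε : 0 < ε) : ∃ k : Fin n → ℤ, k ≠ 0 ∧ ‖projVec P k‖ < ε := by
  let f : (Fin n → ℝ) →L[ℝ] EuclideanSpace ℝ (Fin d) := LinearMap.toContinuousLinearMap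
    ((EuclideanSpace.equiv (Fin d) ℝ).symm.toLinearEquiv.toLinearMap ∘ₗ P.mulVecLin)
  have hf : ¬ Function.Injective f := fun h => by
    have := LinearMap.finrank_le_finrank_of_injective (f := f.toLinearMap) h
    simp only [Module.finrank_fin_fun, finrank_euclideanSpace_fin] at this
    omega
  exact f.exists_intCast_ne_zero_norm_lt hf hε

theorem exists_seq_ne_zero_tendsto_norm_projVec {d n : ℕ} (hdn : d < n)
    (P : Matrix (Fin d) (Fin n) ℝ) :
    ∃ kseq : ℕ → (Fin n → ℤ), (∀ j, kseq j ≠ 0) ∧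
      Tendsto (fun j => ‖projVec P (kseq j)‖) atTop (𝓝 0) := by
  choose kseq hne hlt using fun j : ℕ =>
    exists_projVec_ne_zero_norm_lt hdn P (Nat.one_div_pos_of_nat (n := j))
  exact ⟨kseq, hne, squeeze_zero (fun _ => norm_nonneg _) (fun j => (hlt j).le)
    tendsto_one_div_add_atTop_nhds_zero_nat⟩

theorem sqrt_tsum_norm_sq_ite_eq {α : Type*} [DecidableEq α] (a : α) :
    Real.sqrt (∑' k, ‖(if k = a then (1 : ℂ) else 0)‖ ^ 2) = 1 := by
  simp [apply_ite, tsum_ite_eq]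

theorem sqrt_tsum_rpow_mul_norm_sq_ite_eq {α E : Type*} [DecidableEq α] [SeminormedAddGroup E]
    (w : α → E) (s : ℝ) (a : α) :
    Real.sqrt (∑' k, ‖w k‖ ^ (2 * s) * ‖(if k = a then (1 : ℂ) else 0)‖ ^ 2) = ‖w a‖ ^ s := by
  have hsummand : ∀ k, ‖w k‖ ^ (2 * s) * ‖(if k = a then (1 : ℂ) else 0)‖ ^ 2 =
      if k = a then ‖w a‖ ^ (2 * s) else 0 := fun k => by split_ifs with h <;> simp [h]
  simp only [hsummand, tsum_ite_eq]
  rw [Real.sqrt_eq_rpow, ← Real.rpow_mul (norm_nonneg _)]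
  ring_nf

theorem stmt2_general {d n : ℕ} (hdn : d < n) (P : Matrix (Fin d) (Fin n) ℝ)
    (s : ℝ) (hs : 0 < s) :
    (¬ ∃ C : ℝ, 0 < C ∧ ∀ U : (Fin n → ℤ) → ℂ, U 0 = 0 → (Function.support U).Finite →
        Real.sqrt (∑' k, ‖U k‖ ^ 2) ≤
          C * Real.sqrt (∑' k, ‖projVec P k‖ ^ (2 * s) * ‖U k‖ ^ 2)) ∧
    ∃ kseq : ℕ → (Fin n → ℤ),
      (∀ j, kseq j ≠ 0) ∧
      (∀ j, Real.sqrt (∑' k, ‖(if k = kseq j then (1 : ℂ) else 0)‖ ^ 2) = 1) ∧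
      Filter.Tendsto
        (fun j => Real.sqrt
          (∑' k, ‖projVec P k‖ ^ (2 * s) * ‖(if k = kseq j then (1 : ℂ) else 0)‖ ^ 2))
        Filter.atTop (nhds 0) := by
  obtain ⟨kseq, hne, hlim⟩ := exists_seq_ne_zero_tendsto_norm_projVec hdn P
  have hmode : Tendsto (fun j => ‖projVec P (kseq j)‖ ^ s) atTop (𝓝 0) := by
    simpa [Real.zero_rpow hs.ne'] using hlim.rpow_const (Or.inr hs.le)
  simp only [sqrt_tsum_norm_sq_ite_eq, sqrt_tsum_rpow_mul_norm_sq_ite_eq]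
  refine ⟨?_, kseq, hne, fun _ => trivial, hmode⟩
  rintro ⟨C, -, hbound⟩
  have hCmode : Tendsto (fun j => C * ‖projVec P (kseq j)‖ ^ s) atTop (𝓝 0) := by
    simpa using hmode.const_mul C
  obtain ⟨j, hj⟩ := (hCmode.eventually (gt_mem_nhds one_pos)).exists
  have := hbound (fun k => if k = kseq j then 1 else 0) (if_neg (hne j).symm)
    ((Set.finite_singleton (kseq j)).subset fun k hk => by simpa using hk)
  rw [sqrt_tsum_norm_sq_ite_eq, sqrt_tsum_rpow_mul_norm_sq_ite_eq] at this
  linarith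

/-- For `n > d` and `s > 0` there is no continuous embedding of `H̄_{P,0}^s(𝕋ⁿ)` into
`L²₀(𝕋ⁿ)` (functions represented by their Fourier coefficients; trigonometric
polynomials, i.e. finitely supported coefficient sequences, already witness the
failure).  Moreover, the exponentials `U_j = e^{i k_j·y}` with `|P k_j| → 0` have
`‖U_j‖_{L²} = 1` while `‖U_j‖_{H̄_{P,0}^s} → 0`. -/
theorem stmt2 {d n : ℕ} (hdn : d < n) (P : Matrix (Fin d) (Fin n) ℝ)
    (hP : QLinIndep P) (s : ℝ) (hs : 0 < s) :
    (¬ ∃ C : ℝ, 0 < C ∧ ∀ U : (Fin n → ℤ) → ℂ, U 0 = 0 → (Function.support U).Finite →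
        Real.sqrt (∑' k, ‖U k‖ ^ 2) ≤
          C * Real.sqrt (∑' k, ‖projVec P k‖ ^ (2 * s) * ‖U k‖ ^ 2)) ∧
    ∃ kseq : ℕ → (Fin n → ℤ),
      (∀ j, kseq j ≠ 0) ∧
      (∀ j, Real.sqrt (∑' k, ‖(if k = kseq j then (1 : ℂ) else 0)‖ ^ 2) = 1) ∧
      Filter.Tendsto
        (fun j => Real.sqrt
          (∑' k, ‖projVec P k‖ ^ (2 * s) * ‖(if k = kseq j then (1 : ℂ) else 0)‖ ^ 2))
        Filter.atTop (nhds 0) :=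
  stmt2_general hdn P s hs
end

section
/- Suppose A ≡ A₀ is a constant function on 𝕋ⁿ and P ∈ ℝ^{d×n} (n > d) has ℚ-linearly independent columns. Then for every ε > 0 there exists a nonzero V ∈ H̄_{P,0}^1(𝕋ⁿ) (in fact a single exponential V = e^{ik̄·y}) such that ‖div(Pᵀ A P∇V)‖²_{L²} / ‖V‖²_{H̄_{P,0}^1} ≤ ε. In particular, the PDE residual norm cannot control the H̄_{P,0}^1 norm. -/
theorem IsCompact.exists_lt_dist_lt {α : Type*} [PseudoMetricSpace α] {s : Set α}
    (hs : IsCompact s) {u : ℕ → α} (hu : ∀ m, u m ∈ s) {δ : ℝ} (hδ : 0 < δ) :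
    ∃ p q, p < q ∧ dist (u q) (u p) < δ := by
  obtain ⟨_, -, φ, hφ, hlim⟩ := hs.tendsto_subseq hu
  obtain ⟨N, hN⟩ := Metric.cauchySeq_iff'.1 hlim.cauchySeq δ hδ
  exact ⟨φ N, φ (N + 1), hφ N.lt_succ_self, hN (N + 1) N.le_succ⟩

theorem LinearMap.map_floor_eq_neg_map_fract {ι E : Type*} [AddCommGroup E] [Module ℝ E]
    (L : (ι → ℝ) →ₗ[ℝ] E) {x : ι → ℝ} (hx : L x = 0) (m : ℝ) :
    L (fun j => (⌊m * x j⌋ : ℝ)) = -L (fun j => Int.fract (m * x j)) := by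
  have hsplit : (fun j => (⌊m * x j⌋ : ℝ)) = m • x - fun j => Int.fract (m * x j) := by
    funext j
    simp [Int.self_sub_fract]
  rw [hsplit, map_sub, map_smul, hx, smul_zero, zero_sub]

theorem LinearMap.exists_int_ne_zero_norm_lt {ι E : Type*} [Fintype ι] [NormedAddCommGroup E]
    [NormedSpace ℝ E] [FiniteDimensional ℝ E] (hι : Module.finrank ℝ E < Fintype.card ι)
    (L : (ι → ℝ) →ₗ[ℝ] E) {δ : ℝ} (hδ : 0 < δ) :
    ∃ k : ι → ℤ, k ≠ 0 ∧ ‖L (fun j => (k j : ℝ))‖ < δ := by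
  obtain ⟨y, hyL, hy0⟩ := Submodule.exists_mem_ne_zero_of_ne_bot
    (LinearMap.ker_ne_bot_of_finrank_lt (f := L) (by simpa using hι))
  obtain ⟨j₀, hj₀⟩ : ∃ j, y j ≠ 0 := Function.ne_iff.mp hy0
  set x := (y j₀)⁻¹ • y
  have hx : L x = 0 := by simp [x, LinearMap.mem_ker.1 hyL]
  have hxj₀ : x j₀ = 1 := by simp [x, hj₀]
  have hcpt : IsCompact (L '' Set.univ.pi fun _ => Set.Icc 0 1) :=
    (isCompact_univ_pi fun _ => isCompact_Icc).image L.continuous_of_finiteDimensional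
  obtain ⟨p, q, hpq, hclose⟩ := hcpt.exists_lt_dist_lt
    (u := fun m : ℕ => L fun j => Int.fract (m * x j))
    (fun m => Set.mem_image_of_mem _ fun j _ => ⟨Int.fract_nonneg _, (Int.fract_lt_one _).le⟩) hδ
  refine ⟨fun j => ⌊q * x j⌋ - ⌊p * x j⌋, fun h => ?_, ?_⟩
  · have := congrFun h j₀
    simp only [hxj₀, mul_one, Int.floor_natCast, Pi.zero_apply] at this
    omega
  · have hsub : (fun j => ((⌊q * x j⌋ - ⌊p * x j⌋ : ℤ) : ℝ))
        = (fun j => (⌊q * x j⌋ : ℝ)) - fun j => (⌊p * x j⌋ : ℝ) := by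
      funext j
      push_cast
      rfl
    rwa [hsub, map_sub, L.map_floor_eq_neg_map_fract hx, L.map_floor_eq_neg_map_fract hx,
      neg_sub_neg, norm_sub_rev, ← dist_eq_norm]

theorem projVec_eq_linearMap {d n : ℕ} (P : Matrix (Fin d) (Fin n) ℝ) (k : Fin n → ℤ) :
    projVec P k
      = ((EuclideanSpace.equiv (Fin d) ℝ).symm.toLinearMap ∘ₗ P.mulVecLin) fun j => (k j : ℝ) :=
  rfl

theorem projVec_ne_zero {d n : ℕ} {P : Matrix (Fin d) (Fin n) ℝ} (hP : QLinIndep P)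
    {k : Fin n → ℤ} (hk : k ≠ 0) : projVec P k ≠ 0 := by
  intro h
  have hPk : P.mulVec (fun j => (k j : ℝ)) = 0 := by
    simpa [projVec] using congrArg (EuclideanSpace.equiv (Fin d) ℝ) h
  have hkℚ := hP (fun j => (k j : ℚ)) fun i => by
    simpa [Matrix.mulVec, dotProduct] using congrFun hPk i
  exact hk (funext fun j => by simpa using congrFun hkℚ j)

/-- For `V = e^{ik·y}`, `‖div(Pᵀ A₀ P∇V)‖²_{L²} = A₀²|Pk|⁴` and `‖V‖²_{H̄_{P,0}^1} = |Pk|²`. -/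
theorem stmt18 {d n : ℕ} (hdn : d < n) (P : Matrix (Fin d) (Fin n) ℝ)
    (hP : QLinIndep P) (A₀ : ℝ) :
    ∀ ε : ℝ, 0 < ε → ∃ k : Fin n → ℤ, k ≠ 0 ∧ 0 < ‖projVec P k‖ ∧
      (A₀ ^ 2 * ‖projVec P k‖ ^ 4) / ‖projVec P k‖ ^ 2 ≤ ε := by
  intro ε hε
  have hA : 0 < A₀ ^ 2 + 1 := by positivity
  obtain ⟨k, hk, hsmall⟩ :=
    LinearMap.exists_int_ne_zero_norm_lt (by simpa using hdn)
      ((EuclideanSpace.equiv (Fin d) ℝ).symm.toLinearMap ∘ₗ P.mulVecLin)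
      (Real.sqrt_pos.2 (div_pos hε hA))
  rw [← projVec_eq_linearMap] at hsmall
  set t := ‖projVec P k‖
  have ht : 0 < t := norm_pos_iff.2 (projVec_ne_zero hP hk)
  have ht2 : t ^ 2 * (A₀ ^ 2 + 1) < ε := (lt_div_iff₀ hA).1 ((Real.lt_sqrt ht.le).1 hsmall)
  refine ⟨k, hk, ht, ?_⟩
  calc A₀ ^ 2 * t ^ 4 / t ^ 2 = A₀ ^ 2 * t ^ 2 := by field_simp
    _ ≤ ε := by nlinarith [sq_nonneg A₀, sq_nonneg t]
end
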